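/- Suppose N | (r^m − 1), N | (q − 1), gcd(p,r) = 1, there exists a positive integer s with N | (p^s + 1), and φ(p^{−2s}) ≠ r^{2m} (as elements of F_q). Then for all a ∈ F_{r^m}^*, φ(−1)·(g(φ, χ_a))² ≠ −1; consequently the code with generator matrix [I_{r^m} | P] (diagonal of P equal to 0) is a [2r^m, r^m] LCD code over F_q. -/

import Mathlib

open Finset

/-- The dual code of a linear code `C ⊆ F^ι` with respect to the standard
(Euclidean) inner product. -/
def dualCode {F : Type*} [Field F] {ι : Type*} [Fintype ι]
    (C : Submodule F (ι → F)) : Submodule F (ι → F) where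
  carrier := {v | ∀ c ∈ C, dotProduct c v = 0}
  add_mem' := by
    intro a b ha hb c hc
    simp [dotProduct_add, ha c hc, hb c hc]
  zero_mem' := by
    intro c hc
    simp
  smul_mem' := by
    intro t a ha c hc
    simp [dotProduct_smul, ha c hc]

/-!
Since `N ∣ p ^ s + 1`, the character `χ = φ` (viewed in `E`) satisfies `χ ^ p ^ s = χ⁻¹`, so the
`p ^ s`-th power Frobenius carries the Gauss sum `g(χ)` to a multiple of `g(χ⁻¹)`, which gives
`g(χ) ^ (p ^ s + 1) = χ(-1) χ(p ^ s) r ^ m`. If `χ(-1) g(χ, χ_a) ^ 2 = -1` for some `a ≠ 0`, then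
`g(χ) ^ (2 (p ^ s + 1)) = 1`, and comparing the two forces `χ(p ^ (-2 s)) = r ^ (2 m)`.

For the code, `P` is a circulant matrix over the additive group of `F_{r^m}`, so the additive
characters diagonalise it with eigenvalues `g(χ, χ_a)`, and `Pᵀ = χ(-1) P`. Hence
`det (G Gᵀ) = det (1 + P Pᵀ) = ∏ₐ (1 + χ(-1) g(χ, χ_a) ^ 2)`, where the factor at `a = 0` is `1`
and the others are nonzero by the first part. Invertibility of `G Gᵀ` makes the row space of `G`
an LCD code of full rank.
-/

section

open Matrix

theorem CharP.natCast_ne_zero_of_coprime {R : Type*} [AddMonoidWithOne R] {q n : ℕ} [CharP R q]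
    (hq : q ≠ 1) (h : n.Coprime q) : (n : R) ≠ 0 :=
  fun h0 => hq (h.symm.eq_one_of_dvd ((CharP.cast_eq_zero_iff R q n).mp h0))

theorem MulChar.pow_eq_one_of_apply_generator {R R' : Type*} [CommMonoid R] [Finite Rˣ]
    [CommMonoidWithZero R'] {φ : MulChar R R'} {α : Rˣ} (hα : ∀ x : Rˣ, x ∈ Subgroup.zpowers α)
    {n : ℕ} (h : φ α ^ n = 1) : φ ^ n = 1 := by
  ext x
  obtain ⟨k, rfl⟩ := mem_powers_iff_mem_zpowers.mpr (hα x)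
  rw [pow_apply_coe, one_apply_coe, Units.val_pow_eq_pow_val, map_pow, ← pow_mul, mul_comm,
    pow_mul, h, one_pow]

theorem MulChar.ringHomComp_ne_one {R R' R'' : Type*} [CommMonoid R] [CommRing R'] [CommRing R'']
    {f : R' →+* R''} (hf : Function.Injective f) {φ : MulChar R R'} (hφ : φ ≠ 1) :
    φ.ringHomComp f ≠ 1 := by
  rwa [← ringHomComp_one f, (injective_ringHomComp hf).ne_iff]

theorem MulChar.apply_pow_eq_one_of_pow_eq_one {R R' : Type*} [Field R] [CommRing R']
    {χ : MulChar R R'} {n : ℕ} (hχn : χ ^ n = 1) {a : R} (ha : a ≠ 0) : χ a ^ n = 1 := by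
  rw [← Units.val_mk0 ha, ← pow_apply_coe, hχn, one_apply_coe]

theorem AddChar.isPrimitive_zmodChar_comp_trace {r : ℕ} [Fact r.Prime] {K E : Type*} [Field K]
    [Fintype K] [Algebra (ZMod r) K] [Field E] {ζ : E} (hζ : IsPrimitiveRoot ζ r) :
    ((zmodChar r hζ.pow_eq_one).compAddMonoidHom
      (Algebra.trace (ZMod r) K).toAddMonoidHom).IsPrimitive := by
  refine IsPrimitive.of_ne_one (ne_one_iff.mpr ?_)
  obtain ⟨x, hx⟩ := Algebra.trace_surjective (ZMod r) K 1
  refine ⟨x, ?_⟩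
  rw [compAddMonoidHom_apply, LinearMap.toAddMonoidHom_coe, hx, zmodChar_apply, ZMod.val_one,
    pow_one]
  exact hζ.ne_one (Fact.out : r.Prime).one_lt

section GaussSum

variable {R R' : Type*}

theorem gaussSum_eq_sum_sdiff_zero [Field R] [Fintype R] [DecidableEq R] [CommRing R']
    (χ : MulChar R R') (ψ : AddChar R R') : gaussSum χ ψ = ∑ x ∈ univ \ {0}, χ x * ψ x := by
  rw [gaussSum, ← sum_sdiff (subset_univ {0}), sum_singleton, MulChar.map_zero, zero_mul,
    add_zero]

theorem gaussSum_pow_char_pow [CommRing R] [Fintype R] [CommRing R'] (p : ℕ) [Fact p.Prime]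
    [CharP R' p] (χ : MulChar R R') (ψ : AddChar R R') (s : ℕ) :
    gaussSum χ ψ ^ p ^ s = gaussSum (χ ^ p ^ s) (ψ ^ p ^ s) := by
  induction s with
  | zero => simp
  | succ n ih => rw [pow_succ, pow_mul, ih, gaussSum_frob, ← pow_mul, ← pow_mul]

variable [Field R] [Fintype R] [Field R'] {p : ℕ} [Fact p.Prime] [CharP R' p]
  {χ : MulChar R R'} {ψ : AddChar R R'} {s : ℕ}

theorem gaussSum_pow_char_pow_add_one (hχ : χ ≠ 1) (hψ : ψ.IsPrimitive) (hp : IsUnit (p : R))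
    (hχs : χ ^ (p ^ s + 1) = 1) :
    gaussSum χ ψ ^ (p ^ s + 1) = χ (-1) * χ ((p : R) ^ s) * Fintype.card R := by
  have hinv : χ ^ p ^ s = χ⁻¹ := eq_inv_of_mul_eq_one_left (by rwa [← pow_succ])
  have hunit : IsUnit ((p : R) ^ s) := hp.pow s
  calc gaussSum χ ψ ^ (p ^ s + 1)
      = gaussSum χ ψ * gaussSum χ⁻¹ (ψ.mulShift hunit.unit) := by
        rw [pow_succ', gaussSum_pow_char_pow p, hinv, AddChar.pow_mulShift, hunit.unit_spec]
        push_cast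
        rfl
    _ = χ ((p : R) ^ s) * (χ (-1) * gaussSum χ ψ * gaussSum χ⁻¹ ψ⁻¹) := by
        rw [gaussSum_mulShift_eq, inv_inv, hunit.unit_spec, ← mul_gaussSum_inv_eq_gaussSum χ⁻¹,
          MulChar.inv_apply', inv_neg_one]
        ring
    _ = χ (-1) * χ ((p : R) ^ s) * Fintype.card R := by
        rw [mul_assoc (χ (-1)), gaussSum_mul_gaussSum_eq_card hχ hψ]
        ring

theorem apply_inv_char_pow_eq_card_sq_of_mul_gaussSum_sq_eq_neg_one (hχ : χ ≠ 1)
    (hψ : ψ.IsPrimitive) (hp : IsUnit (p : R)) (hχs : χ ^ (p ^ s + 1) = 1) {a : R} (ha : a ≠ 0)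
    (h : χ (-1) * gaussSum χ (ψ.mulShift a) ^ 2 = -1) :
    χ ((p : R) ^ (2 * s))⁻¹ = (Fintype.card R : R') ^ 2 := by
  have hsq : χ (-1) * gaussSum χ ψ ^ 2 = -χ a ^ 2 := by
    have := gaussSum_mulShift χ ψ (Units.mk0 a ha)
    rw [Units.val_mk0] at this
    rw [← this]
    linear_combination (χ a ^ 2) * h
  have hone : gaussSum χ ψ ^ (2 * (p ^ s + 1)) = 1 :=
    calc gaussSum χ ψ ^ (2 * (p ^ s + 1))
        = χ (-1) ^ (p ^ s + 1) * (gaussSum χ ψ ^ 2) ^ (p ^ s + 1) := by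
          rw [χ.apply_pow_eq_one_of_pow_eq_one hχs (neg_ne_zero.mpr one_ne_zero), one_mul,
            pow_mul]
      _ = (-1) ^ (p ^ s + 1) * (χ a ^ (p ^ s + 1)) ^ 2 := by
          rw [← mul_pow, hsq, neg_pow, ← pow_mul, ← pow_mul, mul_comm 2]
      _ = 1 := by
          rw [χ.apply_pow_eq_one_of_pow_eq_one hχs ha, pow_succ, neg_one_pow_char_pow]
          ring
  have hneg : χ (-1) ^ 2 = 1 := by rw [sq, ← map_mul, neg_one_mul, neg_neg, map_one]
  have hp2s : χ ((p : R) ^ (2 * s)) * (Fintype.card R : R') ^ 2 = 1 := by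
    rw [← hone, pow_mul' (gaussSum χ ψ), gaussSum_pow_char_pow_add_one hχ hψ hp hχs, pow_mul',
      map_pow]
    linear_combination -(χ ((p : R) ^ s) ^ 2 * (Fintype.card R : R') ^ 2) * hneg
  have hunit : (p : R) ^ (2 * s) ≠ 0 := (hp.pow _).ne_zero
  rw [← mul_one (χ _), ← hp2s, ← mul_assoc, ← map_mul, inv_mul_cancel₀ hunit, map_one, one_mul]

end GaussSum

theorem Matrix.det_eq_prod_of_mul_eq_mul_diagonal {n R : Type*} [Fintype n] [DecidableEq n]
    [CommRing R] [IsDomain R] {A V : Matrix n n R} {d : n → R} (hV : V.det ≠ 0)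
    (h : A * V = V * diagonal d) : A.det = ∏ i, d i := by
  have := congrArg det h
  rw [det_mul, det_mul, det_diagonal, mul_comm] at this
  exact mul_left_cancel₀ hV this

theorem RingHom.map_det_one_add_mul_transpose {n k R S : Type*} [Fintype n] [DecidableEq n]
    [Fintype k] [CommRing R] [CommRing S] (f : R →+* S) (P : Matrix n k R) :
    f (1 + P * Pᵀ).det = (1 + P.map f * (P.map f)ᵀ).det := by
  rw [RingHom.map_det, RingHom.mapMatrix_apply, Matrix.map_add, Matrix.map_one, Matrix.map_mul,
    transpose_map] <;> simp

section AddCharMatrix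

variable {R R' : Type*} [CommRing R] [Fintype R] [DecidableEq R] [CommRing R']

def addCharMatrix (ψ : AddChar R R') : Matrix R R R' := of fun i a => ψ (a * i)

theorem circulant_mul_addCharMatrix (w : R → R') (ψ : AddChar R R') :
    circulant w * addCharMatrix ψ =
      addCharMatrix ψ * diagonal fun a => ∑ t, w (-t) * ψ (a * t) := by
  ext i a
  rw [mul_apply, mul_diagonal, mul_sum]
  refine Fintype.sum_equiv (Equiv.subRight i) _ _ fun j => ?_
  simp only [circulant_apply, addCharMatrix, of_apply, Equiv.subRight_apply, neg_sub]
  rw [mul_left_comm, ← AddChar.map_add_eq_mul, mul_sub, add_sub_cancel]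

variable [IsDomain R']

theorem addCharMatrix_inv_mul_addCharMatrix {ψ : AddChar R R'} (hψ : ψ.IsPrimitive) :
    addCharMatrix ψ⁻¹ * addCharMatrix ψ = (Fintype.card R : R') • (1 : Matrix R R R') := by
  ext a b
  have hterm : ∀ i, ψ⁻¹ (i * a) * ψ (b * i) = ψ (i * (b - a)) := fun i => by
    rw [AddChar.inv_apply, ← AddChar.map_add_eq_mul]
    ring_nf
  simp only [mul_apply, addCharMatrix, of_apply, hterm, AddChar.sum_mulShift _ hψ, sub_eq_zero,
    Matrix.smul_apply, one_apply, eq_comm (a := a)]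
  split_ifs <;> simp

theorem det_addCharMatrix_ne_zero {ψ : AddChar R R'} (hψ : ψ.IsPrimitive)
    (hR : (Fintype.card R : R') ≠ 0) : (addCharMatrix ψ).det ≠ 0 := by
  have := congrArg det (addCharMatrix_inv_mul_addCharMatrix hψ)
  rw [det_mul, det_smul, det_one, mul_one] at this
  exact right_ne_zero_of_mul (this ▸ pow_ne_zero _ hR)

end AddCharMatrix

section CirculantMulChar

variable {R R' : Type*}

theorem MulChar.transpose_circulant_apply_neg [CommRing R] [CommRing R'] (χ : MulChar R R') :
    (circulant fun x => χ (-x))ᵀ = χ (-1) • circulant fun x => χ (-x) := by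
  rw [transpose_circulant, ← circulant_smul]
  congr 1
  ext x
  rw [Pi.smul_apply, smul_eq_mul, ← map_mul, neg_one_mul, neg_neg]

variable [Field R] [Fintype R] [DecidableEq R] [Field R'] {ψ : AddChar R R'}

theorem det_one_add_circulant_mulChar_mul_transpose (χ : MulChar R R') (hψ : ψ.IsPrimitive)
    (hR : (Fintype.card R : R') ≠ 0) :
    det (1 + circulant (fun x => χ (-x)) * (circulant fun x => χ (-x))ᵀ) =
      ∏ a, (1 + χ (-1) * gaussSum χ (ψ.mulShift a) ^ 2) := by
  set P := circulant fun x => χ (-x)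
  set d := fun a => gaussSum χ (ψ.mulShift a)
  have hPV : P * addCharMatrix ψ = addCharMatrix ψ * diagonal d := by
    simp only [P, d, circulant_mul_addCharMatrix, neg_neg, gaussSum, AddChar.mulShift_apply]
  apply det_eq_prod_of_mul_eq_mul_diagonal (det_addCharMatrix_ne_zero hψ hR)
  rw [χ.transpose_circulant_apply_neg, mul_smul_comm, add_mul, one_mul, smul_mul_assoc, mul_assoc,
    hPV, ← mul_assoc, hPV, mul_assoc, diagonal_mul_diagonal, ← mul_smul_comm, ← mul_one_add,
    ← diagonal_one, ← diagonal_smul, diagonal_add]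
  simp only [d, sq, Pi.smul_apply, smul_eq_mul]

theorem det_one_add_circulant_mulChar_mul_transpose_ne_zero {χ : MulChar R R'} (hχ : χ ≠ 1)
    (hψ : ψ.IsPrimitive) (hR : (Fintype.card R : R') ≠ 0)
    (h : ∀ a : R, a ≠ 0 → χ (-1) * gaussSum χ (ψ.mulShift a) ^ 2 ≠ -1) :
    det (1 + circulant (fun x => χ (-x)) * (circulant fun x => χ (-x))ᵀ) ≠ 0 := by
  rw [det_one_add_circulant_mulChar_mul_transpose χ hψ hR, prod_ne_zero_iff]
  intro a _
  rcases eq_or_ne a 0 with rfl | ha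
  · rw [AddChar.mulShift_zero, gaussSum_one_right hχ]
    simp
  · exact fun h0 => h a ha (eq_neg_of_add_eq_zero_right h0)

end CirculantMulChar

section Code

variable {ι κ R : Type*} [Fintype ι] [Fintype κ] [DecidableEq ι]

theorem Matrix.vecMul_injective_of_isUnit_mul_transpose [CommRing R] {G : Matrix ι κ R}
    (h : IsUnit (G * Gᵀ)) : Function.Injective G.vecMul := fun x y hxy =>
  vecMul_injective_of_isUnit h (by simpa only [vecMul_vecMul] using congrArg (· ᵥ* Gᵀ) hxy)

/-- Massey's criterion. -/
theorem span_row_inf_dualCode_eq_bot [Field R] {G : Matrix ι κ R} (h : IsUnit (G * Gᵀ)) :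
    Submodule.span R (Set.range G.row) ⊓ dualCode (Submodule.span R (Set.range G.row)) = ⊥ := by
  rw [eq_bot_iff]
  rintro v ⟨hvC, hvD⟩
  rw [← range_vecMulLinear] at hvC
  obtain ⟨x, rfl⟩ := hvC
  have hx : x ᵥ* G ᵥ* Gᵀ = 0 ᵥ* G ᵥ* Gᵀ := by
    ext i
    rw [zero_vecMul, zero_vecMul, vecMul_transpose, Pi.zero_apply]
    exact hvD (G i) (Submodule.subset_span ⟨i, rfl⟩)
  rw [vecMul_vecMul, vecMul_vecMul] at hx
  rw [Submodule.mem_bot, vecMulLinear_apply, vecMul_injective_of_isUnit h hx, zero_vecMul]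

theorem finrank_span_row_of_isUnit_mul_transpose [Field R] {G : Matrix ι κ R}
    (h : IsUnit (G * Gᵀ)) :
    Module.finrank R (Submodule.span R (Set.range G.row)) = Fintype.card ι :=
  finrank_span_eq_card (vecMul_injective_iff.mp (vecMul_injective_of_isUnit_mul_transpose h))

theorem Matrix.isUnit_fromCols_one_mul_transpose [Field R] {P : Matrix ι κ R}
    (hP : (1 + P * Pᵀ).det ≠ 0) :
    IsUnit (fromCols (1 : Matrix ι ι R) P * (fromCols 1 P)ᵀ) := by
  have hG : fromCols (1 : Matrix ι ι R) P * (fromCols 1 P)ᵀ = 1 + P * Pᵀ := by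
    rw [transpose_fromCols, transpose_one]
    -- the product elaborates with the `CStarMatrix` multiplication, so it is matched up to defeq
    exact (fromCols_mul_fromRows _ _ _ _).trans (by rw [Matrix.one_mul])
  exact hG ▸ (isUnit_iff_isUnit_det _).mpr hP.isUnit

end Code

end

theorem lcd_construction_A_case2_general {r m p N : ℕ} [Fact r.Prime]
    (hp : p.Prime) (hpr : Nat.Coprime p r)
    (hN : 1 < N)
    {K F E : Type*} [Field K] [Fintype K] [DecidableEq K] [Algebra (ZMod r) K]
    (hK : Fintype.card K = r ^ m)
    [Field F]
    [Field E] [CharP E p] [Algebra F E]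
    (ζ : E) (hζ : IsPrimitiveRoot ζ r)
    (α : Kˣ) (hα : ∀ x : Kˣ, x ∈ Subgroup.zpowers α)
    (u : F) (hu : orderOf u = N)
    (φ : MulChar K F) (hφ : ∀ k : ℕ, φ ((α ^ k : Kˣ) : K) = u ^ k)
    (s : ℕ) (hNs : N ∣ p ^ s + 1)
    (hp2s : φ (((p : K) ^ (2 * s))⁻¹) ≠ (r : F) ^ (2 * m)) :
    let g : K → E := fun a =>
      ∑ x ∈ univ \ {0},
        algebraMap F E (φ x) * ζ ^ (Algebra.trace (ZMod r) K (a * x)).val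
    let P : Matrix K K F := Matrix.of fun i j => if j = i then 0 else φ (j - i)
    let G := Matrix.fromCols (1 : Matrix K K F) P
    let C := Submodule.span F (Set.range fun i => G i)
    (∀ a : K, a ≠ 0 → algebraMap F E (φ (-1)) * (g a) ^ 2 ≠ -1) ∧
      C ⊓ dualCode C = ⊥ ∧ Module.finrank F C = r ^ m := by
  intro g P G C
  have : Fact p.Prime := ⟨hp⟩
  have : CharP K r := charP_of_injective_algebraMap' (ZMod r) r
  set f := algebraMap F E
  set χ := φ.ringHomComp f
  set ψ := (AddChar.zmodChar r hζ.pow_eq_one).compAddMonoidHom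
    (Algebra.trace (ZMod r) K).toAddMonoidHom
  have hψ : ψ.IsPrimitive := AddChar.isPrimitive_zmodChar_comp_trace hζ
  have hφα : φ α = u := by simpa using hφ 1
  have hχ : χ ≠ 1 := MulChar.ringHomComp_ne_one f.injective <| MulChar.ne_one_iff.mpr
    ⟨α, hφα ▸ fun hu1 => hN.ne' (hu ▸ orderOf_eq_one_iff.mpr hu1)⟩
  have hχs : χ ^ (p ^ s + 1) = 1 := by
    rw [MulChar.ringHomComp_pow, MulChar.pow_eq_one_of_apply_generator hα
      (hφα ▸ orderOf_dvd_iff_pow_eq_one.mp (hu ▸ hNs)), MulChar.ringHomComp_one]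
  have hpK : IsUnit (p : K) :=
    (CharP.natCast_ne_zero_of_coprime (Fact.out : r.Prime).ne_one hpr).isUnit
  have hcard : (Fintype.card K : E) ≠ 0 := by
    rw [hK, Nat.cast_pow]
    exact pow_ne_zero _ (CharP.natCast_ne_zero_of_coprime hp.ne_one hpr.symm)
  have hg : ∀ a, g a = gaussSum χ (ψ.mulShift a) := fun a =>
    (gaussSum_eq_sum_sdiff_zero χ (ψ.mulShift a)).symm
  have hsq : ∀ a : K, a ≠ 0 → f (φ (-1)) * g a ^ 2 ≠ -1 := fun a ha h =>
    hp2s <| f.injective <| by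
      rw [hg] at h
      rw [← MulChar.ringHomComp_apply,
        apply_inv_char_pow_eq_card_sq_of_mul_gaussSum_sq_eq_neg_one hχ hψ hpK hχs ha h, hK,
        map_pow, map_natCast, Nat.cast_pow, ← pow_mul, mul_comm]
  have hP : P.map f = Matrix.circulant fun x => χ (-x) := by
    ext i j
    by_cases hij : j = i <;> simp [P, hij, χ, MulChar.map_zero]
  have hdet : (1 + P * P.transpose).det ≠ 0 := fun h0 =>
    det_one_add_circulant_mulChar_mul_transpose_ne_zero hχ hψ hcard (fun a ha => hg a ▸ hsq a ha)
      (by rw [← hP, ← f.map_det_one_add_mul_transpose, h0, map_zero])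
  have hGG : IsUnit (G * G.transpose) := Matrix.isUnit_fromCols_one_mul_transpose hdet
  exact ⟨hsq, span_row_inf_dualCode_eq_bot hGG,
    (finrank_span_row_of_isUnit_mul_transpose hGG).trans hK⟩

/-- if `N ∣ r^m - 1`, `N ∣ q - 1`, `gcd (p, r) = 1`, `N ∣ p^s + 1` for some
`s ≥ 1` and `φ (p^{-2s}) ≠ r^{2m}` in `F_q`, where `φ` is the order-`N` multiplicative
character of `F_{r^m}` determined by `φ (α^k) = u^k`, then `φ(-1) g(φ, χ_a)² ≠ -1` for
every `a ≠ 0`, and the code with generator matrix `[I | P]` (diagonal of `P` zero) is a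
`[2 r^m, r^m]` LCD code over `F_q`. -/
theorem lcd_construction_A_case2 {r m p e q N : ℕ} [Fact r.Prime] (hm : 0 < m)
    (hp : p.Prime) (he : 0 < e) (hq : q = p ^ e) (hpr : Nat.Coprime p r)
    (hN : 1 < N) (hNr : N ∣ r ^ m - 1) (hNq : N ∣ q - 1)
    {K F E : Type*} [Field K] [Fintype K] [DecidableEq K] [Algebra (ZMod r) K]
    (hK : Fintype.card K = r ^ m)
    [Field F] [Fintype F] [CharP F p] (hF : Fintype.card F = q)
    [Field E] [CharP E p] [IsAlgClosed E] [Algebra F E]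
    (ζ : E) (hζ : IsPrimitiveRoot ζ r)
    (α : Kˣ) (hα : ∀ x : Kˣ, x ∈ Subgroup.zpowers α)
    (u : F) (hu : orderOf u = N)
    (φ : MulChar K F) (hφ : ∀ k : ℕ, φ ((α ^ k : Kˣ) : K) = u ^ k)
    (s : ℕ) (hs : 0 < s) (hNs : N ∣ p ^ s + 1)
    (hp2s : φ (((p : K) ^ (2 * s))⁻¹) ≠ (r : F) ^ (2 * m)) :
    let g : K → E := fun a =>
      ∑ x ∈ univ \ {0},
        algebraMap F E (φ x) * ζ ^ (Algebra.trace (ZMod r) K (a * x)).val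
    let P : Matrix K K F := Matrix.of fun i j => if j = i then 0 else φ (j - i)
    let G := Matrix.fromCols (1 : Matrix K K F) P
    let C := Submodule.span F (Set.range fun i => G i)
    (∀ a : K, a ≠ 0 → algebraMap F E (φ (-1)) * (g a) ^ 2 ≠ -1) ∧
      C ⊓ dualCode C = ⊥ ∧ Module.finrank F C = r ^ m :=
  lcd_construction_A_case2_general hp hpr hN hK ζ hζ α hα u hu φ hφ s hNs hp2s
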